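/- For smooth functions h, f : ℝ → ℝ, the vector fields y_h = (1/2) y h' ∂_x + h ∂_y - (1/2) y h'' ∂_u and z_f = f ∂_t + (1/6)(2x f' + y² f'') ∂_x + (2y/3) f' ∂_y + (1/6)(-4u f' - 2x f'' - y² f''') ∂_u on ℝ⁴ satisfy [y_h, z_f] = y_{((2/3) f' h - f h')}. -/

import Mathlib

noncomputable section

abbrev P4 := ℝ × ℝ × ℝ × ℝ

def pdT (F : P4 → ℝ) (p : P4) : ℝ := deriv (fun s => F (s, p.2.1, p.2.2.1, p.2.2.2)) p.1
def pdX (F : P4 → ℝ) (p : P4) : ℝ := deriv (fun s => F (p.1, s, p.2.2.1, p.2.2.2)) p.2.1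
def pdY (F : P4 → ℝ) (p : P4) : ℝ := deriv (fun s => F (p.1, p.2.1, s, p.2.2.2)) p.2.2.1
def pdU (F : P4 → ℝ) (p : P4) : ℝ := deriv (fun s => F (p.1, p.2.1, p.2.2.1, s)) p.2.2.2

/-- The generator z_f of the ZK symmetry algebra, acting as a derivation. -/
def Zf (f : ℝ → ℝ) (F : P4 → ℝ) (p : P4) : ℝ :=
  f p.1 * pdT F p
  + (1 / 6) * (2 * p.2.1 * deriv f p.1 + p.2.2.1 ^ 2 * deriv (deriv f) p.1) * pdX F p
  + (2 * p.2.2.1 / 3) * deriv f p.1 * pdY F p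
  + (1 / 6) * (-4 * p.2.2.2 * deriv f p.1 - 2 * p.2.1 * deriv (deriv f) p.1
      - p.2.2.1 ^ 2 * deriv (deriv (deriv f)) p.1) * pdU F p

/-- The generator x_g = g ∂_x - g' ∂_u. -/
def Xg (g : ℝ → ℝ) (F : P4 → ℝ) (p : P4) : ℝ :=
  g p.1 * pdX F p - deriv g p.1 * pdU F p

/-- The generator y_h = (1/2) y h' ∂_x + h ∂_y - (1/2) y h'' ∂_u. -/
def Yh (h : ℝ → ℝ) (F : P4 → ℝ) (p : P4) : ℝ :=
  (1 / 2) * p.2.2.1 * deriv h p.1 * pdX F p + h p.1 * pdY F p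
  - (1 / 2) * p.2.2.1 * deriv (deriv h) p.1 * pdU F p

end

section auxlem

private lemma le1 : ((⊤ : ℕ∞) : WithTop ℕ∞) ≠ 0 := by
  simp

private lemma leT : ((⊤ : ℕ∞) : WithTop ℕ∞) + 1 ≤ ((⊤ : ℕ∞) : WithTop ℕ∞) := by
  exact_mod_cast le_top

lemma pdT_eq' {F : P4 → ℝ} (hF : Differentiable ℝ F) (q : P4) :
    pdT F q = fderiv ℝ F q (1, 0, 0, 0) := by
  have l : HasDerivAt (fun s : ℝ => ((s, q.2.1, q.2.2.1, q.2.2.2) : P4)) ((1, 0, 0, 0) : P4) q.1 :=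
    HasDerivAt.prodMk (hasDerivAt_id _) (hasDerivAt_const _ _)
  exact ((hF q).hasFDerivAt.comp_hasDerivAt q.1 l).deriv

lemma pdX_eq' {F : P4 → ℝ} (hF : Differentiable ℝ F) (q : P4) :
    pdX F q = fderiv ℝ F q (0, 1, 0, 0) := by
  have l : HasDerivAt (fun s : ℝ => ((q.1, s, q.2.2.1, q.2.2.2) : P4)) ((0, 1, 0, 0) : P4) q.2.1 :=
    HasDerivAt.prodMk (hasDerivAt_const _ _) (HasDerivAt.prodMk (hasDerivAt_id _) (hasDerivAt_const _ _))
  exact ((hF q).hasFDerivAt.comp_hasDerivAt q.2.1 l).deriv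

lemma pdY_eq' {F : P4 → ℝ} (hF : Differentiable ℝ F) (q : P4) :
    pdY F q = fderiv ℝ F q (0, 0, 1, 0) := by
  have l : HasDerivAt (fun s : ℝ => ((q.1, q.2.1, s, q.2.2.2) : P4)) ((0, 0, 1, 0) : P4) q.2.2.1 :=
    HasDerivAt.prodMk (hasDerivAt_const _ _) (HasDerivAt.prodMk (hasDerivAt_const _ _)
      (HasDerivAt.prodMk (hasDerivAt_id _) (hasDerivAt_const _ _)))
  exact ((hF q).hasFDerivAt.comp_hasDerivAt q.2.2.1 l).deriv

lemma pdU_eq' {F : P4 → ℝ} (hF : Differentiable ℝ F) (q : P4) :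
    pdU F q = fderiv ℝ F q (0, 0, 0, 1) := by
  have l : HasDerivAt (fun s : ℝ => ((q.1, q.2.1, q.2.2.1, s) : P4)) ((0, 0, 0, 1) : P4) q.2.2.2 :=
    HasDerivAt.prodMk (hasDerivAt_const _ _) (HasDerivAt.prodMk (hasDerivAt_const _ _)
      (HasDerivAt.prodMk (hasDerivAt_const _ _) (hasDerivAt_id _)))
  exact ((hF q).hasFDerivAt.comp_hasDerivAt q.2.2.2 l).deriv

lemma hasDerivAt_pd' {F : P4 → ℝ} (hF : ContDiff ℝ (⊤ : ℕ∞) F) (v w : P4) {ι : ℝ → P4} {s : ℝ}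
    (hι : HasDerivAt ι w s) :
    HasDerivAt (fun r => fderiv ℝ F (ι r) v) (fderiv ℝ (fderiv ℝ F) (ι s) w v) s := by
  have hD : ContDiff ℝ (⊤ : ℕ∞) (fderiv ℝ F) := hF.fderiv_right leT
  have h1 : HasDerivAt (fun r => fderiv ℝ F (ι r)) (fderiv ℝ (fderiv ℝ F) (ι s) w) s :=
    (hD.differentiable le1 (ι s)).hasFDerivAt.comp_hasDerivAt s hι
  have h2 := h1.clm_apply (hasDerivAt_const s v)
  simpa using h2

lemma d2_symm' {F : P4 → ℝ} (hF : ContDiff ℝ (⊤ : ℕ∞) F) (p v w : P4) :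
    fderiv ℝ (fderiv ℝ F) p v w = fderiv ℝ (fderiv ℝ F) p w v :=
  second_derivative_symmetric (fun z => (hF.differentiable le1 z).hasFDerivAt)
    (((hF.fderiv_right leT).differentiable le1 p).hasFDerivAt) v w

end auxlem

theorem stmt6 (h f : ℝ → ℝ) (hh : ContDiff ℝ (⊤ : ℕ∞) h) (hf : ContDiff ℝ (⊤ : ℕ∞) f) :
    ∀ F : P4 → ℝ, ContDiff ℝ (⊤ : ℕ∞) F → ∀ p : P4,
      Yh h (Zf f F) p - Zf f (Yh h F) p
        = Yh (fun t => (2 / 3) * deriv f t * h t - f t * deriv h t) F p := by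
  intro F hF0 p
  obtain ⟨t, x, y, u⟩ := p
  have hF : ContDiff ℝ (⊤ : ℕ∞) F := hF0.of_le (by simp)
  have hf' : ContDiff ℝ (⊤ : ℕ∞) f := hf.of_le (by simp)
  have hh' : ContDiff ℝ (⊤ : ℕ∞) h := hh.of_le (by simp)
  have hFd : Differentiable ℝ F := hF.differentiable le1
  have pT := pdT_eq' hFd
  have pX := pdX_eq' hFd
  have pY := pdY_eq' hFd
  have pU := pdU_eq' hFd
  -- smoothness of derivatives
  have hf1 : ContDiff ℝ (⊤ : ℕ∞) (deriv f) := (contDiff_infty_iff_deriv.mp hf').2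
  have hf2 : ContDiff ℝ (⊤ : ℕ∞) (deriv (deriv f)) := (contDiff_infty_iff_deriv.mp hf1).2
  have hh1 : ContDiff ℝ (⊤ : ℕ∞) (deriv h) := (contDiff_infty_iff_deriv.mp hh').2
  have hh2 : ContDiff ℝ (⊤ : ℕ∞) (deriv (deriv h)) := (contDiff_infty_iff_deriv.mp hh1).2
  have hdf : ∀ s : ℝ, HasDerivAt f (deriv f s) s :=
    fun s => (hf'.differentiable le1 s).hasDerivAt
  have hdf1 : ∀ s : ℝ, HasDerivAt (deriv f) (deriv (deriv f) s) s :=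
    fun s => (hf1.differentiable le1 s).hasDerivAt
  have hdf2 : ∀ s : ℝ, HasDerivAt (deriv (deriv f)) (deriv (deriv (deriv f)) s) s :=
    fun s => (hf2.differentiable le1 s).hasDerivAt
  have hdh : ∀ s : ℝ, HasDerivAt h (deriv h s) s :=
    fun s => (hh'.differentiable le1 s).hasDerivAt
  have hdh1 : ∀ s : ℝ, HasDerivAt (deriv h) (deriv (deriv h) s) s :=
    fun s => (hh1.differentiable le1 s).hasDerivAt
  have hdh2 : ∀ s : ℝ, HasDerivAt (deriv (deriv h)) (deriv (deriv (deriv h)) s) s :=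
    fun s => (hh2.differentiable le1 s).hasDerivAt
  -- coordinate lines
  have LT : HasDerivAt (fun s : ℝ => ((s, x, y, u) : P4)) ((1, 0, 0, 0) : P4) t :=
    HasDerivAt.prodMk (hasDerivAt_id _) (hasDerivAt_const _ _)
  have LX : HasDerivAt (fun s : ℝ => ((t, s, y, u) : P4)) ((0, 1, 0, 0) : P4) x :=
    HasDerivAt.prodMk (hasDerivAt_const _ _) (HasDerivAt.prodMk (hasDerivAt_id _) (hasDerivAt_const _ _))
  have LY : HasDerivAt (fun s : ℝ => ((t, x, s, u) : P4)) ((0, 0, 1, 0) : P4) y :=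
    HasDerivAt.prodMk (hasDerivAt_const _ _) (HasDerivAt.prodMk (hasDerivAt_const _ _)
      (HasDerivAt.prodMk (hasDerivAt_id _) (hasDerivAt_const _ _)))
  have LU : HasDerivAt (fun s : ℝ => ((t, x, y, s) : P4)) ((0, 0, 0, 1) : P4) u :=
    HasDerivAt.prodMk (hasDerivAt_const _ _) (HasDerivAt.prodMk (hasDerivAt_const _ _)
      (HasDerivAt.prodMk (hasDerivAt_const _ _) (hasDerivAt_id _)))
  -- directional derivatives of the partials
  have DT : ∀ v : P4, HasDerivAt (fun s => fderiv ℝ F (s, x, y, u) v)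
      (fderiv ℝ (fderiv ℝ F) (t, x, y, u) (1, 0, 0, 0) v) t := fun v => hasDerivAt_pd' hF v _ LT
  have DX : ∀ v : P4, HasDerivAt (fun s => fderiv ℝ F (t, s, y, u) v)
      (fderiv ℝ (fderiv ℝ F) (t, x, y, u) (0, 1, 0, 0) v) x := fun v => hasDerivAt_pd' hF v _ LX
  have DY : ∀ v : P4, HasDerivAt (fun s => fderiv ℝ F (t, x, s, u) v)
      (fderiv ℝ (fderiv ℝ F) (t, x, y, u) (0, 0, 1, 0) v) y := fun v => hasDerivAt_pd' hF v _ LY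
  have DU : ∀ v : P4, HasDerivAt (fun s => fderiv ℝ F (t, x, y, s) v)
      (fderiv ℝ (fderiv ℝ F) (t, x, y, u) (0, 0, 0, 1) v) u := fun v => hasDerivAt_pd' hF v _ LU
  -- pdX (Zf f F)
  have cZX := ((DX (1,0,0,0)).const_mul (f t)
    |>.add ((((hasDerivAt_id' x).const_mul (deriv f t / 3)).add_const
        (y ^ 2 * deriv (deriv f) t / 6)).mul (DX (0,1,0,0)))
    |>.add ((DX (0,0,1,0)).const_mul (2 * y / 3 * deriv f t))
    |>.add ((((hasDerivAt_id' x).const_mul (-(deriv (deriv f) t) / 3)).add_const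
        (-(4 * u * deriv f t + y ^ 2 * deriv (deriv (deriv f)) t) / 6)).mul (DX (0,0,0,1))))
  have BZX : HasDerivAt (fun s => Zf f F (t, s, y, u)) _ x :=
    cZX.congr_of_eventuallyEq (Filter.Eventually.of_forall fun s => by
      simp only [Zf, pT, pX, pY, pU, Pi.add_apply, Pi.mul_apply, Pi.sub_apply]; ring)
  have EZX : pdX (Zf f F) (t, x, y, u) = _ := BZX.deriv
  -- pdY (Zf f F)
  have cZY := ((DY (1,0,0,0)).const_mul (f t)
    |>.add ((((hasDerivAt_pow 2 y).const_mul (deriv (deriv f) t / 6)).add_const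
        (x * deriv f t / 3)).mul (DY (0,1,0,0)))
    |>.add (((hasDerivAt_id' y).const_mul (2 * deriv f t / 3)).mul (DY (0,0,1,0)))
    |>.add ((((hasDerivAt_pow 2 y).const_mul (-(deriv (deriv (deriv f)) t) / 6)).add_const
        (-(4 * u * deriv f t + 2 * x * deriv (deriv f) t) / 6)).mul (DY (0,0,0,1))))
  have BZY : HasDerivAt (fun s => Zf f F (t, x, s, u)) _ y :=
    cZY.congr_of_eventuallyEq (Filter.Eventually.of_forall fun s => by
      simp only [Zf, pT, pX, pY, pU, Pi.add_apply, Pi.mul_apply, Pi.sub_apply]; ring)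
  have EZY : pdY (Zf f F) (t, x, y, u) = _ := BZY.deriv
  -- pdU (Zf f F)
  have cZU := ((DU (1,0,0,0)).const_mul (f t)
    |>.add ((DU (0,1,0,0)).const_mul ((2 * x * deriv f t + y ^ 2 * deriv (deriv f) t) / 6))
    |>.add ((DU (0,0,1,0)).const_mul (2 * y / 3 * deriv f t))
    |>.add ((((hasDerivAt_id' u).const_mul (-(2 * deriv f t) / 3)).add_const
        (-(2 * x * deriv (deriv f) t + y ^ 2 * deriv (deriv (deriv f)) t) / 6)).mul
      (DU (0,0,0,1))))
  have BZU : HasDerivAt (fun s => Zf f F (t, x, y, s)) _ u :=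
    cZU.congr_of_eventuallyEq (Filter.Eventually.of_forall fun s => by
      simp only [Zf, pT, pX, pY, pU, Pi.add_apply, Pi.mul_apply, Pi.sub_apply]; ring)
  have EZU : pdU (Zf f F) (t, x, y, u) = _ := BZU.deriv
  -- pdT (Yh h F)
  have cYT := ((((hdh1 t).const_mul (1 / 2 * y)).mul (DT (0,1,0,0)))
    |>.add ((hdh t).mul (DT (0,0,1,0)))
    |>.sub (((hdh2 t).const_mul (1 / 2 * y)).mul (DT (0,0,0,1))))
  have BYT : HasDerivAt (fun s => Yh h F (s, x, y, u)) _ t :=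
    cYT.congr_of_eventuallyEq (Filter.Eventually.of_forall fun s => by
      simp only [Yh, pX, pY, pU, Pi.add_apply, Pi.mul_apply, Pi.sub_apply]; try ring)
  have EYT : pdT (Yh h F) (t, x, y, u) = _ := BYT.deriv
  -- pdX (Yh h F)
  have cYX := ((DX (0,1,0,0)).const_mul (1 / 2 * y * deriv h t)
    |>.add ((DX (0,0,1,0)).const_mul (h t))
    |>.sub ((DX (0,0,0,1)).const_mul (1 / 2 * y * deriv (deriv h) t)))
  have BYX : HasDerivAt (fun s => Yh h F (t, s, y, u)) _ x :=
    cYX.congr_of_eventuallyEq (Filter.Eventually.of_forall fun s => by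
      simp only [Yh, pX, pY, pU, Pi.add_apply, Pi.mul_apply, Pi.sub_apply]; try ring)
  have EYX : pdX (Yh h F) (t, x, y, u) = _ := BYX.deriv
  -- pdY (Yh h F)
  have cYY := ((((hasDerivAt_id' y).const_mul (1 / 2 * deriv h t)).mul (DY (0,1,0,0)))
    |>.add ((DY (0,0,1,0)).const_mul (h t))
    |>.sub (((hasDerivAt_id' y).const_mul (1 / 2 * deriv (deriv h) t)).mul (DY (0,0,0,1))))
  have BYY : HasDerivAt (fun s => Yh h F (t, x, s, u)) _ y :=
    cYY.congr_of_eventuallyEq (Filter.Eventually.of_forall fun s => by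
      simp only [Yh, pX, pY, pU, Pi.add_apply, Pi.mul_apply, Pi.sub_apply]; try ring)
  have EYY : pdY (Yh h F) (t, x, y, u) = _ := BYY.deriv
  -- pdU (Yh h F)
  have cYU := ((DU (0,1,0,0)).const_mul (1 / 2 * y * deriv h t)
    |>.add ((DU (0,0,1,0)).const_mul (h t))
    |>.sub ((DU (0,0,0,1)).const_mul (1 / 2 * y * deriv (deriv h) t)))
  have BYU : HasDerivAt (fun s => Yh h F (t, x, y, s)) _ u :=
    cYU.congr_of_eventuallyEq (Filter.Eventually.of_forall fun s => by
      simp only [Yh, pX, pY, pU, Pi.add_apply, Pi.mul_apply, Pi.sub_apply]; try ring)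
  have EYU : pdU (Yh h F) (t, x, y, u) = _ := BYU.deriv
  -- derivatives of the bracket coefficient k
  have hkd : ∀ r : ℝ, HasDerivAt (fun q => 2 / 3 * deriv f q * h q - f q * deriv h q)
      (2 / 3 * deriv (deriv f) r * h r + 2 / 3 * deriv f r * deriv h r
        - (deriv f r * deriv h r + f r * deriv (deriv h) r)) r :=
    fun r => ((((hdf1 r).const_mul (2 / 3)).mul (hdh r))).sub ((hdf r).mul (hdh1 r))
  have kde : deriv (fun q => 2 / 3 * deriv f q * h q - f q * deriv h q)
      = fun r => 2 / 3 * deriv (deriv f) r * h r + 2 / 3 * deriv f r * deriv h r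
        - (deriv f r * deriv h r + f r * deriv (deriv h) r) :=
    funext fun r => (hkd r).deriv
  have K1 := (hkd t).deriv
  have BK2 : HasDerivAt (fun r => 2 / 3 * deriv (deriv f) r * h r + 2 / 3 * deriv f r * deriv h r
      - (deriv f r * deriv h r + f r * deriv (deriv h) r)) _ t :=
    ((((hdf2 t).const_mul (2 / 3)).mul (hdh t)).add
      (((hdf1 t).const_mul (2 / 3)).mul (hdh1 t))).sub
      (((hdf1 t).mul (hdh1 t)).add ((hdf t).mul (hdh2 t)))
  have K2 := BK2.deriv
  -- symmetry of second derivatives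
  have sXT : fderiv ℝ (fderiv ℝ F) (t, x, y, u) ((0,1,0,0) : P4) ((1,0,0,0) : P4)
      = fderiv ℝ (fderiv ℝ F) (t, x, y, u) ((1,0,0,0) : P4) ((0,1,0,0) : P4) := d2_symm' hF _ _ _
  have sYT : fderiv ℝ (fderiv ℝ F) (t, x, y, u) ((0,0,1,0) : P4) ((1,0,0,0) : P4)
      = fderiv ℝ (fderiv ℝ F) (t, x, y, u) ((1,0,0,0) : P4) ((0,0,1,0) : P4) := d2_symm' hF _ _ _
  have sUT : fderiv ℝ (fderiv ℝ F) (t, x, y, u) ((0,0,0,1) : P4) ((1,0,0,0) : P4)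
      = fderiv ℝ (fderiv ℝ F) (t, x, y, u) ((1,0,0,0) : P4) ((0,0,0,1) : P4) := d2_symm' hF _ _ _
  have sYX : fderiv ℝ (fderiv ℝ F) (t, x, y, u) ((0,0,1,0) : P4) ((0,1,0,0) : P4)
      = fderiv ℝ (fderiv ℝ F) (t, x, y, u) ((0,1,0,0) : P4) ((0,0,1,0) : P4) := d2_symm' hF _ _ _
  have sUX : fderiv ℝ (fderiv ℝ F) (t, x, y, u) ((0,0,0,1) : P4) ((0,1,0,0) : P4)
      = fderiv ℝ (fderiv ℝ F) (t, x, y, u) ((0,1,0,0) : P4) ((0,0,0,1) : P4) := d2_symm' hF _ _ _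
  have sUY : fderiv ℝ (fderiv ℝ F) (t, x, y, u) ((0,0,0,1) : P4) ((0,0,1,0) : P4)
      = fderiv ℝ (fderiv ℝ F) (t, x, y, u) ((0,0,1,0) : P4) ((0,0,0,1) : P4) := d2_symm' hF _ _ _
  -- assemble
  simp only [Yh, Zf]
  rw [EZX, EZY, EZU, EYT, EYX, EYY, EYU, K1, kde, K2, pX, pY, pU,
    sXT, sYT, sUT, sYX, sUX, sUY]
  ring
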